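/- On ℝ⁶ = T*ℝ³ with the magnetized symplectic form ω_B = ω₀ + ε_{ijk}B^i dq^j∧dq^k (B constant), the ternary Hamiltonian vector field of the momenta for the quaternary bracket {f₁,f₂,f₃,f₄}Ω = df₁∧df₂∧df₃∧df₄∧ω_B is X_{p₁,p₂,p₃} = c·B^i ∂/∂q^i for a fixed nonzero constant c; in particular it is zero when B = 0 (standard symplectic structure) and nonzero when B ≠ 0. -/

import Mathlib

/-!
Every form in the identity has top degree 6, so it is a multiple of
`vol = dp₀ ∧ dp₁ ∧ dp₂ ∧ dq₀ ∧ dq₁ ∧ dq₂`. Once `dp₀ ∧ dp₁ ∧ dp₂` is a factor, any further `dpⱼ`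
kills the product: `ω₀` contributes nothing and `dg` may be replaced by its `q`-part. What remains
is alternating in the `q`-coefficients of the last three factors, hence a `3 × 3` determinant
times `vol`, and contracting it with `εᵢⱼₖ Bⁱ` gives `2 Bⁱ ∂g/∂qⁱ · vol`. Since the `2`-forms
`dpⱼ ∧ dqⱼ` commute and square to zero, `ω₀³ = 3! dp₀dq₀dp₁dq₁dp₂dq₂ = -6 vol`, so `c = -2`.
-/

set_option synthInstance.maxHeartbeats 1000000

noncomputable section
open ExteriorAlgebra

abbrev V := (Fin 3 → ℝ) × (Fin 3 → ℝ)

def dp (j : Fin 3) : Module.Dual ℝ V :=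
  (LinearMap.proj j).comp (LinearMap.fst ℝ (Fin 3 → ℝ) (Fin 3 → ℝ))

def dq (j : Fin 3) : Module.Dual ℝ V :=
  (LinearMap.proj j).comp (LinearMap.snd ℝ (Fin 3 → ℝ) (Fin 3 → ℝ))

/-- ω₀ = Σᵢ dpᵢ ∧ dqⁱ -/
def omega0 : ExteriorAlgebra ℝ (Module.Dual ℝ V) :=
  ∑ j, ExteriorAlgebra.ι ℝ (dp j) * ExteriorAlgebra.ι ℝ (dq j)

/-- the Levi-Civita symbol on Fin 3 -/
def eps (i j k : Fin 3) : ℝ :=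
  (((j : ℝ) - (i : ℝ)) * ((k : ℝ) - (j : ℝ)) * ((k : ℝ) - (i : ℝ))) / 2

/-- ω_B = ω₀ + ε_{ijk} B^i dq^j ∧ dq^k -/
def omegaB (B : Fin 3 → ℝ) : ExteriorAlgebra ℝ (Module.Dual ℝ V) :=
  omega0 + ∑ i, ∑ j, ∑ k,
    (eps i j k * B i) • (ExteriorAlgebra.ι ℝ (dq j) * ExteriorAlgebra.ι ℝ (dq k))

namespace AlternatingMap

variable {R M N ι : Type*} [CommRing R] [AddCommGroup M] [Module R M] [AddCommGroup N] [Module R N]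
  [Fintype ι] [DecidableEq ι]

theorem apply_eq_basis_det_smul (f : M [⋀^ι]→ₗ[R] N) (e : Module.Basis ι R M) (v : ι → M) :
    f v = e.det v • f e := by
  suffices f = e.det.smulRight (f e) from congr($this v)
  refine e.ext_alternating fun i hi => ?_
  let σ : Equiv.Perm ι := Equiv.ofBijective i (Finite.injective_iff_bijective.1 hi)
  change f (e ∘ σ) = e.det (e ∘ σ) • f e
  simp [AlternatingMap.map_perm, Module.Basis.det_self]

end AlternatingMap

open scoped IsMulCommutative in
theorem add_add_pow_three_of_commute_of_mul_self_eq_zero {A : Type*} [Ring A] {a b c : A}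
    (hab : Commute a b) (hac : Commute a c) (hbc : Commute b c)
    (ha : a * a = 0) (hb : b * b = 0) (hc : c * c = 0) :
    (a + b + c) ^ 3 = 6 * (a * b * c) := by
  have hcomm : ∀ x ∈ ({a, b, c} : Set A), ∀ y ∈ ({a, b, c} : Set A), Commute x y := by
    simp only [Set.mem_insert_iff, Set.mem_singleton_iff]
    rintro x (hx | hx | hx) y (hy | hy | hy) <;> rw [hx, hy] <;>
      first | exact Commute.refl _ | assumption | exact Commute.symm ‹_›
  -- the identity is checked in the commutative ring generated by `a`, `b`, `c`
  have := Subring.isMulCommutative_closure fun x hx y hy => (hcomm x hx y hy).eq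
  let a' : Subring.closure {a, b, c} := ⟨a, Subring.subset_closure (by simp)⟩
  let b' : Subring.closure {a, b, c} := ⟨b, Subring.subset_closure (by simp)⟩
  let c' : Subring.closure {a, b, c} := ⟨c, Subring.subset_closure (by simp)⟩
  have ha' : a' * a' = 0 := Subtype.ext ha
  have hb' : b' * b' = 0 := Subtype.ext hb
  have hc' : c' * c' = 0 := Subtype.ext hc
  have hcube : (a' + b' + c') ^ 3 = 6 * (a' * b' * c') := by
    linear_combination (a' + 3 * b' + 3 * c') * ha' + (b' + 3 * a' + 3 * c') * hb' +
      (c' + 3 * a' + 3 * b') * hc'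
  have hcube_val := congr_arg Subtype.val hcube
  push_cast at hcube_val
  exact hcube_val

namespace ExteriorAlgebra

variable {R M : Type*} [CommRing R] [AddCommGroup M] [Module R M]

theorem ι_mul_ι_anticomm (a b : M) : ι R b * ι R a = -(ι R a * ι R b) :=
  eq_neg_of_add_eq_zero_left (by rw [add_comm, ι_add_mul_swap])

theorem ι_mul_ι_mul_anticomm (a b : M) (x : ExteriorAlgebra R M) :
    ι R b * (ι R a * x) = -(ι R a * (ι R b * x)) := by
  rw [← mul_assoc, ι_mul_ι_anticomm, neg_mul, mul_assoc]

theorem commute_ι_mul_ι_ι (a b c : M) : Commute (ι R a * ι R b) (ι R c) := by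
  rw [Commute, SemiconjBy, mul_assoc, ι_mul_ι_mul_anticomm a c, ι_mul_ι_anticomm b c, mul_neg,
    neg_neg]

theorem ι_mul_ι_mul_self_eq_zero (a b : M) : ι R a * ι R b * (ι R a * ι R b) = 0 := by
  rw [← mul_assoc, (commute_ι_mul_ι_ι a b a).eq, ← mul_assoc, ι_sq_zero, zero_mul, zero_mul]

theorem ιMulti_three (v : Fin 3 → M) : ιMulti R 3 v = ι R (v 0) * ι R (v 1) * ι R (v 2) := by
  simp [mul_assoc, Matrix.vecTail]

theorem ιMulti_mul_ι_self {n : ℕ} (v : Fin n → M) (i : Fin n) : ιMulti R n v * ι R (v i) = 0 := by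
  have hsnoc : ιMulti R n v * ι R (v i) = ιMulti R (n + 1) (Fin.snoc v (v i)) := by
    simpa [Fin.append_right_eq_snoc] using ιMulti_mul_ιMulti (R := R) v ![v i]
  rw [hsnoc]
  exact ιMulti_eq_zero_of_not_inj fun hinj => Fin.castSucc_ne_last i (hinj (by simp))

theorem ιMulti_mul_ι_of_mem_span {n : ℕ} (v : Fin n → M) {x : M}
    (hx : x ∈ Submodule.span R (Set.range v)) : ιMulti R n v * ι R x = 0 := by
  induction hx using Submodule.span_induction with
  | mem x hx => obtain ⟨i, rfl⟩ := hx; exact ιMulti_mul_ι_self v i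
  | zero => simp
  | add x y _ _ hx hy => simp [mul_add, hx, hy]
  | smul r x _ hx => simp [hx]

theorem ιMulti_mul_ι_mul_ι_self {n : ℕ} (v : Fin n → M) (x : M) (i : Fin n) :
    ιMulti R n v * ι R x * ι R (v i) = 0 := by
  rw [mul_assoc, ι_mul_ι_anticomm, mul_neg, ← mul_assoc, ιMulti_mul_ι_self, zero_mul, neg_zero]

end ExteriorAlgebra

def qCoords (ℓ : Module.Dual ℝ V) : Fin 3 → ℝ := fun j => ℓ (0, Pi.single j 1)

theorem dual_eq_sum_dp_add_linearCombination_dq (ℓ : Module.Dual ℝ V) :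
    ℓ = ∑ j, ℓ (Pi.single j 1, 0) • dp j + Fintype.linearCombination ℝ dq (qCoords ℓ) := by
  ext j <;> simp [dp, dq, qCoords, Fintype.linearCombination_apply, Pi.single_apply]

theorem ιMulti_dp_mul_ι_eq_qCoords (ℓ : Module.Dual ℝ V) :
    ιMulti ℝ 3 dp * ι ℝ ℓ = ιMulti ℝ 3 dp * ι ℝ (Fintype.linearCombination ℝ dq (qCoords ℓ)) := by
  have hspan : ∑ j, ℓ (Pi.single j 1, 0) • dp j ∈ Submodule.span ℝ (Set.range dp) :=
    Submodule.sum_mem _ fun j _ => Submodule.smul_mem _ _ (Submodule.subset_span ⟨j, rfl⟩)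
  conv_lhs => rw [dual_eq_sum_dp_add_linearCombination_dq ℓ]
  rw [map_add, mul_add, ιMulti_mul_ι_of_mem_span dp hspan, zero_add]

theorem ιMulti_dp_mul_ι_mul_omega0_eq_zero (ℓ : Module.Dual ℝ V) :
    ιMulti ℝ 3 dp * ι ℝ ℓ * omega0 = 0 := by
  simp only [omega0, Finset.mul_sum, ← mul_assoc, ιMulti_mul_ι_mul_ι_self, zero_mul,
    Finset.sum_const_zero]

def dpWedgeDq : (Fin 3 → ℝ) [⋀^Fin 3]→ₗ[ℝ] ExteriorAlgebra ℝ (Module.Dual ℝ V) :=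
  (LinearMap.mulLeft ℝ (ιMulti ℝ 3 dp)).compAlternatingMap
    ((ιMulti ℝ 3).compLinearMap (Fintype.linearCombination ℝ dq))

theorem dpWedgeDq_apply (c : Fin 3 → Fin 3 → ℝ) :
    dpWedgeDq c = ιMulti ℝ 3 dp * ιMulti ℝ 3 (fun i => Fintype.linearCombination ℝ dq (c i)) :=
  rfl

theorem dpWedgeDq_eq_det_smul (c : Fin 3 → Fin 3 → ℝ) :
    dpWedgeDq c = (Matrix.of c).det • (ιMulti ℝ 3 dp * ιMulti ℝ 3 dq) := by
  rw [dpWedgeDq.apply_eq_basis_det_smul (Pi.basisFun ℝ (Fin 3)), Pi.basisFun_det, dpWedgeDq_apply]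
  simp only [ιMulti_succ_apply, ιMulti_zero_apply, mul_one, Pi.basisFun_apply,
    Fintype.linearCombination_apply_single, one_smul]
  rfl

theorem sum_eps_mul_det (B c : Fin 3 → ℝ) :
    ∑ i, ∑ j, ∑ k, eps i j k * B i * (Matrix.of ![c, Pi.single j 1, Pi.single k 1]).det =
      2 * ∑ i, B i * c i := by
  simp only [Fin.sum_univ_three, eps, Matrix.det_fin_three, Matrix.of_apply, Matrix.cons_val,
    Pi.single_apply, Fin.reduceEq, ↓reduceIte, Fin.val_zero, Fin.val_one, Fin.val_two,
    Nat.cast_zero, Nat.cast_one, Nat.cast_ofNat]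
  ring

theorem ιMulti_dp_mul_ι_mul_sum_eps (B : Fin 3 → ℝ) (ℓ : Module.Dual ℝ V) :
    ιMulti ℝ 3 dp * ι ℝ ℓ *
        ∑ i, ∑ j, ∑ k, (eps i j k * B i) • (ι ℝ (dq j) * ι ℝ (dq k)) =
      (2 * ∑ i, B i * qCoords ℓ i) • (ιMulti ℝ 3 dp * ιMulti ℝ 3 dq) := by
  have hwedge (j k : Fin 3) : ιMulti ℝ 3 dp * ι ℝ ℓ * (ι ℝ (dq j) * ι ℝ (dq k)) =
      dpWedgeDq ![qCoords ℓ, Pi.single j 1, Pi.single k 1] := by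
    rw [ιMulti_dp_mul_ι_eq_qCoords, mul_assoc, dpWedgeDq_apply]
    simp [Fintype.linearCombination_apply_single, Matrix.vecTail]
  simp only [Finset.mul_sum, mul_smul_comm, hwedge, dpWedgeDq_eq_det_smul, smul_smul,
    ← Finset.sum_smul, sum_eps_mul_det]

theorem omega0_pow_three : omega0 ^ 3 = -(6 : ℝ) • (ιMulti ℝ 3 dp * ιMulti ℝ 3 dq) := by
  have hcomm (a b c d : Module.Dual ℝ V) : Commute (ι ℝ a * ι ℝ b) (ι ℝ c * ι ℝ d) :=
    (commute_ι_mul_ι_ι a b c).mul_right (commute_ι_mul_ι_ι a b d)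
  have hsq (a b : Module.Dual ℝ V) := ι_mul_ι_mul_self_eq_zero (R := ℝ) a b
  rw [omega0, Fin.sum_univ_three, add_add_pow_three_of_commute_of_mul_self_eq_zero
      (hcomm _ _ _ _) (hcomm _ _ _ _) (hcomm _ _ _ _) (hsq _ _) (hsq _ _) (hsq _ _),
    ιMulti_three, ιMulti_three, neg_smul, ofNat_smul_eq_nsmul ℝ 6, nsmul_eq_mul, Nat.cast_ofNat]
  simp only [mul_assoc, ι_mul_ι_mul_anticomm (dp 1) (dq 0), ι_mul_ι_mul_anticomm (dp 2) (dq 0),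
    ι_mul_ι_mul_anticomm (dp 2) (dq 1), mul_neg, neg_mul, neg_neg]

theorem ternary_field_of_momenta_is_magnetic_field :
    ∃ c : ℝ, c ≠ 0 ∧
      ∀ (B : Fin 3 → ℝ) (g : V → ℝ) (x : V), DifferentiableAt ℝ g x →
        ExteriorAlgebra.ι ℝ (dp 0) * ExteriorAlgebra.ι ℝ (dp 1) *
            ExteriorAlgebra.ι ℝ (dp 2) *
            ExteriorAlgebra.ι ℝ ((fderiv ℝ g x).toLinearMap) * omegaB B =
          (c * ∑ i, B i * fderiv ℝ g x ((0 : Fin 3 → ℝ), Pi.single i 1)) •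
            ((6 : ℝ)⁻¹ • omega0 ^ 3) := by
  refine ⟨-2, by norm_num, fun B g x _ => ?_⟩
  rw [← ιMulti_three, omegaB, mul_add, ιMulti_dp_mul_ι_mul_omega0_eq_zero, zero_add,
    ιMulti_dp_mul_ι_mul_sum_eps, omega0_pow_three, smul_smul, smul_smul]
  congr 1
  simp only [qCoords, ContinuousLinearMap.coe_coe]
  ring
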